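/- Let F ⊣ U be an adjunction with U : D ⥤ C strong monoidal, between monoidal categories with left duals, and let T = F ⋙ U be the induced bimonad on C. Define S_x : T(ᵛ(T x)) → ᵛx as the composite UF(ᵛ(UF x)) → UF(U(ᵛ(F x))) → U(ᵛ(F x)) → ᵛ(UF x) → ᵛx built from the comparison isomorphism φ : ᵛ ∘ Uᵒᵖ ≅ U ∘ ᵛ, the counit ε of the adjunction, and ᵛ applied to the unit η. Then S is a left antipode for the bimonad T, i.e. S satisfies axioms (HM1) and (HM2); hence T is a Hopf monad. -/

import Mathlib

open CategoryTheory MonoidalCategory Opposite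

/-- A left duality on a monoidal category: a contravariant functor `ᵛ` together with
dinatural evaluation and coevaluation families satisfying the snake identities. -/
structure LeftDuality (C : Type*) [Category C] [MonoidalCategory C] where
  V : Cᵒᵖ ⥤ C
  ev : ∀ a : C, V.obj (op a) ⊗ a ⟶ 𝟙_ C
  coev : ∀ a : C, 𝟙_ C ⟶ a ⊗ V.obj (op a)
  ev_dinatural : ∀ {a b : C} (f : a ⟶ b),
    (V.map f.op ⊗ₘ 𝟙 a) ≫ ev a = (𝟙 (V.obj (op b)) ⊗ₘ f) ≫ ev b
  coev_dinatural : ∀ {a b : C} (f : a ⟶ b),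
    coev a ≫ (f ⊗ₘ 𝟙 (V.obj (op a))) = coev b ≫ (𝟙 b ⊗ₘ V.map f.op)
  snake₁ : ∀ a : C,
    (λ_ a).inv ≫ (coev a ⊗ₘ 𝟙 a) ≫ (α_ a (V.obj (op a)) a).hom ≫
      (𝟙 a ⊗ₘ ev a) ≫ (ρ_ a).hom = 𝟙 a
  snake₂ : ∀ a : C,
    (ρ_ (V.obj (op a))).inv ≫ (𝟙 (V.obj (op a)) ⊗ₘ coev a) ≫
      (α_ (V.obj (op a)) a (V.obj (op a))).inv ≫ (ev a ⊗ₘ 𝟙 (V.obj (op a))) ≫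
        (λ_ (V.obj (op a))).hom = 𝟙 (V.obj (op a))

variable {C D : Type*} [Category C] [Category D] [MonoidalCategory C] [MonoidalCategory D]

/-- The oplax tensorator on a left adjoint `F` of a lax monoidal functor `U`. -/
noncomputable def mateTensorator (F : C ⥤ D) (U : D ⥤ C) (adj : F ⊣ U) [U.LaxMonoidal]
    (x y : C) : F.obj (x ⊗ y) ⟶ F.obj x ⊗ F.obj y :=
  F.map (adj.unit.app x ⊗ₘ adj.unit.app y) ≫
    F.map (Functor.LaxMonoidal.μ U (F.obj x) (F.obj y)) ≫
      adj.counit.app (F.obj x ⊗ F.obj y)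

/-- The oplax counit on a left adjoint `F` of a lax monoidal functor `U`. -/
noncomputable def mateCounit (F : C ⥤ D) (U : D ⥤ C) (adj : F ⊣ U) [U.LaxMonoidal] :
    F.obj (𝟙_ C) ⟶ 𝟙_ D :=
  F.map (Functor.LaxMonoidal.ε U) ≫ adj.counit.app (𝟙_ D)

/-- The oplax tensorator of the bimonad `T = F ⋙ U` for `U` strong monoidal. -/
noncomputable def monadTensorator (F : C ⥤ D) (U : D ⥤ C) (adj : F ⊣ U) [U.Monoidal]
    (x y : C) : U.obj (F.obj (x ⊗ y)) ⟶ U.obj (F.obj x) ⊗ U.obj (F.obj y) :=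
  U.map (mateTensorator F U adj x y) ≫ Functor.OplaxMonoidal.δ U (F.obj x) (F.obj y)

/-- The oplax counit of the bimonad `T = F ⋙ U` for `U` strong monoidal. -/
noncomputable def monadCounit (F : C ⥤ D) (U : D ⥤ C) (adj : F ⊣ U) [U.Monoidal] :
    U.obj (F.obj (𝟙_ C)) ⟶ 𝟙_ C :=
  U.map (mateCounit F U adj) ≫ Functor.OplaxMonoidal.η U

/-- The evaluation exhibiting `U(ᵛd)` as a left dual of `U(d)`. -/
noncomputable def evU (U : D ⥤ C) [U.Monoidal] (DD : LeftDuality D) (d : D) :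
    U.obj (DD.V.obj (op d)) ⊗ U.obj d ⟶ 𝟙_ C :=
  Functor.LaxMonoidal.μ U (DD.V.obj (op d)) d ≫ U.map (DD.ev d) ≫ Functor.OplaxMonoidal.η U

/-- The canonical comparison map `ᵛU(d) ⟶ U(ᵛd)` for a strong monoidal `U`. -/
noncomputable def dualComparison (U : D ⥤ C) [U.Monoidal]
    (DC : LeftDuality C) (DD : LeftDuality D) (d : D) :
    DC.V.obj (op (U.obj d)) ⟶ U.obj (DD.V.obj (op d)) :=
  (ρ_ (DC.V.obj (op (U.obj d)))).inv ≫
    (𝟙 (DC.V.obj (op (U.obj d))) ⊗ₘ Functor.LaxMonoidal.ε U) ≫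
      (𝟙 (DC.V.obj (op (U.obj d))) ⊗ₘ U.map (DD.coev d)) ≫
        (𝟙 (DC.V.obj (op (U.obj d))) ⊗ₘ Functor.OplaxMonoidal.δ U d (DD.V.obj (op d))) ≫
          (α_ (DC.V.obj (op (U.obj d))) (U.obj d) (U.obj (DD.V.obj (op d)))).inv ≫
            (DC.ev (U.obj d) ⊗ₘ 𝟙 (U.obj (DD.V.obj (op d)))) ≫
              (λ_ (U.obj (DD.V.obj (op d)))).hom

/-- The inverse comparison map `U(ᵛd) ⟶ ᵛU(d)`. -/
noncomputable def dualComparisonInv (U : D ⥤ C) [U.Monoidal]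
    (DC : LeftDuality C) (DD : LeftDuality D) (d : D) :
    U.obj (DD.V.obj (op d)) ⟶ DC.V.obj (op (U.obj d)) :=
  (ρ_ (U.obj (DD.V.obj (op d)))).inv ≫
    (𝟙 (U.obj (DD.V.obj (op d))) ⊗ₘ DC.coev (U.obj d)) ≫
      (α_ (U.obj (DD.V.obj (op d))) (U.obj d) (DC.V.obj (op (U.obj d)))).inv ≫
        (evU U DD d ⊗ₘ 𝟙 (DC.V.obj (op (U.obj d)))) ≫
          (λ_ (DC.V.obj (op (U.obj d)))).hom

/-- The candidate left antipode for the bimonad `T = F ⋙ U`: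
`S_x : T(ᵛ(T x)) ⟶ ᵛx` is the composite
`UF(ᵛ(UF x)) → UF(U(ᵛ(F x))) → U(ᵛ(F x)) → ᵛ(UF x) → ᵛx`
built from the comparison isomorphism, the counit `ε`, and `ᵛ` of the unit `η`. -/
noncomputable def adjunctionAntipode (F : C ⥤ D) (U : D ⥤ C) (adj : F ⊣ U) [U.Monoidal]
    (DC : LeftDuality C) (DD : LeftDuality D) (x : C) :
    U.obj (F.obj (DC.V.obj (op (U.obj (F.obj x))))) ⟶ DC.V.obj (op x) :=
  U.map (F.map (dualComparison U DC DD (F.obj x))) ≫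
    U.map (adj.counit.app (DD.V.obj (op (F.obj x)))) ≫
      dualComparisonInv U DC DD (F.obj x) ≫ DC.V.map (adj.unit.app x).op

/-!
Since `U` is strong monoidal, `U(ᵛd)` is a left dual of `U(d)`, with evaluation `evU` and
coevaluation `coevU`. The comparison `φ_d` and its inverse are then the transposes of `ev_{U d}`
along `coevU` and of `evU` along `coev_{U d}`, so they intertwine the two dualities and are
natural in `d`. The naturality of `φ`, of `φ⁻¹` and of the counit turns the antipode, precomposed
with `T(ᵛ(U ε_d))`, into `U(φ_d♭) ≫ φ_d⁻¹`, where `φ_d♭ : F(ᵛU(d)) ⟶ ᵛd` is the adjoint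
transpose of `φ_d`. Transposing once more along the adjunction, (HM1) and (HM2) become the
compatibility of `φ_d` with the (co)evaluations of `d` and `U(d)`.
-/

open Functor.LaxMonoidal Functor.OplaxMonoidal

section DualTranspose

variable {E : Type*} [Category E] [MonoidalCategory E]

/-- The map `X ⟶ A` classified by a pairing `e : X ⊗ a ⟶ 𝟙` when `cv : 𝟙 ⟶ a ⊗ A` exhibits `A`
as a left dual of `a`. -/
noncomputable def dualTranspose {X a A : E} (cv : 𝟙_ E ⟶ a ⊗ A) (e : X ⊗ a ⟶ 𝟙_ E) :
    X ⟶ A :=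
  (ρ_ X).inv ≫ X ◁ cv ≫ (α_ X a A).inv ≫ e ▷ A ≫ (λ_ A).hom

theorem dualTranspose_whiskerRight_comp {X a A : E} {cv : 𝟙_ E ⟶ a ⊗ A}
    {ev : A ⊗ a ⟶ 𝟙_ E} (e : X ⊗ a ⟶ 𝟙_ E)
    (zigzag : cv ▷ a ≫ (α_ a A a).hom ≫ a ◁ ev = (λ_ a).hom ≫ (ρ_ a).inv) :
    dualTranspose cv e ▷ a ≫ ev = e := by
  calc _ = ((ρ_ X).inv ▷ a ≫ (X ◁ cv) ▷ a ≫ (α_ X a A).inv ▷ a ≫ (α_ (X ⊗ a) A a).hom) ≫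
        e ▷ (A ⊗ a) ≫ 𝟙_ E ◁ ev ≫ (λ_ (𝟙_ E)).hom := by
          simp only [dualTranspose]; monoidal
    _ = ((ρ_ X).inv ▷ a ≫ (X ◁ cv) ▷ a ≫ (α_ X a A).inv ▷ a ≫ (α_ (X ⊗ a) A a).hom) ≫
        (X ⊗ a) ◁ ev ≫ e ▷ 𝟙_ E ≫ (λ_ (𝟙_ E)).hom := by rw [whisker_exchange_assoc]
    _ = X ◁ ((λ_ a).inv ≫ cv ▷ a ≫ (α_ a A a).hom ≫ a ◁ ev ≫ (ρ_ a).hom) ≫ e := by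
        monoidal
    _ = e := by rw [reassoc_of% zigzag]; simp

theorem comp_whiskerLeft_dualTranspose {X a A : E} (cv : 𝟙_ E ⟶ a ⊗ A)
    {cv' : 𝟙_ E ⟶ a ⊗ X} {e : X ⊗ a ⟶ 𝟙_ E}
    (zigzag : cv' ▷ a ≫ (α_ a X a).hom ≫ a ◁ e = (λ_ a).hom ≫ (ρ_ a).inv) :
    cv' ≫ a ◁ dualTranspose cv e = cv := by
  calc _ = (λ_ (𝟙_ E)).inv ≫ cv' ▷ 𝟙_ E ≫ (a ⊗ X) ◁ cv ≫
        ((α_ a X (a ⊗ A)).hom ≫ a ◁ (α_ X a A).inv) ≫ a ◁ e ▷ A ≫ a ◁ (λ_ A).hom := by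
          simp only [dualTranspose]; monoidal
    _ = (λ_ (𝟙_ E)).inv ≫ 𝟙_ E ◁ cv ≫ cv' ▷ (a ⊗ A) ≫
        ((α_ a X (a ⊗ A)).hom ≫ a ◁ (α_ X a A).inv) ≫ a ◁ e ▷ A ≫ a ◁ (λ_ A).hom := by
          rw [← whisker_exchange_assoc]
    _ = cv ≫ ((λ_ a).inv ≫ cv' ▷ a ≫ (α_ a X a).hom ≫ a ◁ e ≫ (ρ_ a).hom) ▷ A := by
        monoidal
    _ = cv := by rw [reassoc_of% zigzag]; simp

theorem comp_dualTranspose {X₁ X₂ a₁ a₂ A₁ A₂ : E} (u : X₂ ⟶ X₁) (w : a₁ ⟶ a₂)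
    (v : A₂ ⟶ A₁) {cv₁ : 𝟙_ E ⟶ a₁ ⊗ A₁} {cv₂ : 𝟙_ E ⟶ a₂ ⊗ A₂}
    {e₁ : X₁ ⊗ a₁ ⟶ 𝟙_ E} {e₂ : X₂ ⊗ a₂ ⟶ 𝟙_ E}
    (he : u ▷ a₁ ≫ e₁ = X₂ ◁ w ≫ e₂) (hcv : cv₁ ≫ w ▷ A₁ = cv₂ ≫ a₂ ◁ v) :
    u ≫ dualTranspose cv₁ e₁ = dualTranspose cv₂ e₂ ≫ v := by
  calc _ = (ρ_ X₂).inv ≫ u ▷ 𝟙_ E ≫ X₁ ◁ cv₁ ≫ (α_ X₁ a₁ A₁).inv ≫ e₁ ▷ A₁ ≫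
        (λ_ A₁).hom := by simp only [dualTranspose]; monoidal
    _ = (ρ_ X₂).inv ≫ X₂ ◁ cv₁ ≫ u ▷ (a₁ ⊗ A₁) ≫ (α_ X₁ a₁ A₁).inv ≫ e₁ ▷ A₁ ≫
        (λ_ A₁).hom := by rw [← whisker_exchange_assoc]
    _ = (ρ_ X₂).inv ≫ X₂ ◁ cv₁ ≫ (α_ X₂ a₁ A₁).inv ≫ (u ▷ a₁ ≫ e₁) ▷ A₁ ≫
        (λ_ A₁).hom := by monoidal
    _ = (ρ_ X₂).inv ≫ X₂ ◁ (cv₁ ≫ w ▷ A₁) ≫ (α_ X₂ a₂ A₁).inv ≫ e₂ ▷ A₁ ≫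
        (λ_ A₁).hom := by rw [he]; monoidal
    _ = (ρ_ X₂).inv ≫ X₂ ◁ cv₂ ≫ (α_ X₂ a₂ A₂).inv ≫ (X₂ ⊗ a₂) ◁ v ≫ e₂ ▷ A₁ ≫
        (λ_ A₁).hom := by rw [hcv]; monoidal
    _ = (ρ_ X₂).inv ≫ X₂ ◁ cv₂ ≫ (α_ X₂ a₂ A₂).inv ≫ e₂ ▷ A₂ ≫ 𝟙_ E ◁ v ≫
        (λ_ A₁).hom := by rw [whisker_exchange_assoc]
    _ = _ := by simp only [dualTranspose]; monoidal

end DualTranspose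

namespace LeftDuality

variable {E : Type*} [Category E] [MonoidalCategory E] (DE : LeftDuality E)

theorem coev_whiskerRight_assoc_whiskerLeft_ev (a : E) :
    DE.coev a ▷ a ≫ (α_ a (DE.V.obj (op a)) a).hom ≫ a ◁ DE.ev a = (λ_ a).hom ≫ (ρ_ a).inv := by
  rw [← cancel_epi (λ_ a).inv, ← cancel_mono (ρ_ a).hom]
  simpa using DE.snake₁ a

theorem map_whiskerRight_ev {a b : E} (f : a ⟶ b) :
    DE.V.map f.op ▷ a ≫ DE.ev a = DE.V.obj (op b) ◁ f ≫ DE.ev b := by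
  simpa using DE.ev_dinatural f

theorem coev_comp_whiskerRight {a b : E} (f : a ⟶ b) :
    DE.coev a ≫ f ▷ DE.V.obj (op a) = DE.coev b ≫ b ◁ DE.V.map f.op := by
  simpa using DE.coev_dinatural f

end LeftDuality

section StrongMonoidal

variable (U : D ⥤ C) [U.Monoidal] (DC : LeftDuality C) (DD : LeftDuality D)

noncomputable def coevU (d : D) : 𝟙_ C ⟶ U.obj d ⊗ U.obj (DD.V.obj (op d)) :=
  ε U ≫ U.map (DD.coev d) ≫ δ U d (DD.V.obj (op d))

theorem evU_dinatural {d₁ d₂ : D} (g : d₁ ⟶ d₂) :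
    U.map (DD.V.map g.op) ▷ U.obj d₁ ≫ evU U DD d₁ =
      U.obj (DD.V.obj (op d₂)) ◁ U.map g ≫ evU U DD d₂ := by
  simp only [evU, μ_natural_left_assoc, μ_natural_right_assoc, ← U.map_comp_assoc,
    DD.map_whiskerRight_ev]

theorem coevU_dinatural {d₁ d₂ : D} (g : d₁ ⟶ d₂) :
    coevU U DD d₁ ≫ U.map g ▷ U.obj (DD.V.obj (op d₁)) =
      coevU U DD d₂ ≫ U.obj d₂ ◁ U.map (DD.V.map g.op) := by
  simp only [coevU, Category.assoc, δ_natural_left, δ_natural_right, ← U.map_comp_assoc,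
    DD.coev_comp_whiskerRight]

theorem coevU_whiskerRight_assoc_whiskerLeft_evU (d : D) :
    coevU U DD d ▷ U.obj d ≫ (α_ (U.obj d) (U.obj (DD.V.obj (op d))) (U.obj d)).hom ≫
      U.obj d ◁ evU U DD d = (λ_ (U.obj d)).hom ≫ (ρ_ (U.obj d)).inv := by
  have hassoc : δ U d (DD.V.obj (op d)) ▷ U.obj d ≫
      (α_ (U.obj d) (U.obj (DD.V.obj (op d))) (U.obj d)).hom ≫
        U.obj d ◁ μ U (DD.V.obj (op d)) d =
      μ U (d ⊗ DD.V.obj (op d)) d ≫ U.map (α_ d (DD.V.obj (op d)) d).hom ≫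
        δ U d (DD.V.obj (op d) ⊗ d) := by
    rw [Functor.Monoidal.map_associator]
    simp only [Category.assoc, Functor.Monoidal.μ_δ, Functor.Monoidal.μ_δ_assoc, Category.comp_id]
  simp only [coevU, evU, comp_whiskerRight, Category.assoc, MonoidalCategory.whiskerLeft_comp]
  slice_lhs 3 5 => rw [hassoc]
  simp only [Category.assoc]
  rw [μ_natural_left_assoc, δ_natural_right_assoc]
  simp only [← U.map_comp_assoc, DD.coev_whiskerRight_assoc_whiskerLeft_ev]
  simp

theorem dualComparison_eq_dualTranspose (d : D) :
    dualComparison U DC DD d = dualTranspose (coevU U DD d) (DC.ev (U.obj d)) := by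
  simp [dualComparison, dualTranspose, coevU]

theorem dualComparisonInv_eq_dualTranspose (d : D) :
    dualComparisonInv U DC DD d = dualTranspose (DC.coev (U.obj d)) (evU U DD d) := by
  simp [dualComparisonInv, dualTranspose]

theorem dualComparisonInv_whiskerRight_ev (d : D) :
    dualComparisonInv U DC DD d ▷ U.obj d ≫ DC.ev (U.obj d) = evU U DD d := by
  rw [dualComparisonInv_eq_dualTranspose]
  exact dualTranspose_whiskerRight_comp _ (DC.coev_whiskerRight_assoc_whiskerLeft_ev _)

theorem dualComparison_whiskerRight_evU (d : D) :
    dualComparison U DC DD d ▷ U.obj d ≫ evU U DD d = DC.ev (U.obj d) := by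
  rw [dualComparison_eq_dualTranspose]
  exact dualTranspose_whiskerRight_comp _ (coevU_whiskerRight_assoc_whiskerLeft_evU U DD d)

theorem coevU_whiskerLeft_dualComparisonInv (d : D) :
    coevU U DD d ≫ U.obj d ◁ dualComparisonInv U DC DD d = DC.coev (U.obj d) := by
  rw [dualComparisonInv_eq_dualTranspose]
  exact comp_whiskerLeft_dualTranspose _ (coevU_whiskerRight_assoc_whiskerLeft_evU U DD d)

theorem coev_whiskerLeft_dualComparison (d : D) :
    DC.coev (U.obj d) ≫ U.obj d ◁ dualComparison U DC DD d = coevU U DD d := by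
  rw [dualComparison_eq_dualTranspose]
  exact comp_whiskerLeft_dualTranspose _ (DC.coev_whiskerRight_assoc_whiskerLeft_ev _)

theorem dualComparison_naturality {d₁ d₂ : D} (g : d₁ ⟶ d₂) :
    DC.V.map (U.map g).op ≫ dualComparison U DC DD d₁ =
      dualComparison U DC DD d₂ ≫ U.map (DD.V.map g.op) := by
  simp only [dualComparison_eq_dualTranspose]
  exact comp_dualTranspose _ _ _ (DC.map_whiskerRight_ev (U.map g)) (coevU_dinatural U DD g)

theorem dualComparisonInv_naturality {d₁ d₂ : D} (g : d₁ ⟶ d₂) :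
    U.map (DD.V.map g.op) ≫ dualComparisonInv U DC DD d₁ =
      dualComparisonInv U DC DD d₂ ≫ DC.V.map (U.map g).op := by
  simp only [dualComparisonInv_eq_dualTranspose]
  exact comp_dualTranspose _ _ _ (evU_dinatural U DD g) (DC.coev_comp_whiskerRight (U.map g))

end StrongMonoidal

section Adjunction

variable (F : C ⥤ D) (U : D ⥤ C) (adj : F ⊣ U)

theorem homEquiv_mateTensorator_comp [U.LaxMonoidal] {x y : C} {d e : D}
    (f : F.obj x ⟶ d) (g : F.obj y ⟶ e) :
    adj.homEquiv _ _ (mateTensorator F U adj x y ≫ (f ⊗ₘ g)) =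
      (adj.homEquiv _ _ f ⊗ₘ adj.homEquiv _ _ g) ≫ μ U d e := by
  simp [mateTensorator, Adjunction.homEquiv_unit, ← μ_natural]

theorem homEquiv_mateCounit [U.LaxMonoidal] : adj.homEquiv _ _ (mateCounit F U adj) = ε U := by
  simp [mateCounit, Adjunction.homEquiv_unit]

variable [U.Monoidal] (DC : LeftDuality C) (DD : LeftDuality D)

/-- The action of `T = F ⋙ U` on `ᵛU(d)` dual to the free action `U(ε_d)` on `U(d)`. -/
noncomputable def dualAction (d : D) :
    U.obj (F.obj (DC.V.obj (op (U.obj d)))) ⟶ DC.V.obj (op (U.obj d)) :=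
  U.map ((adj.homEquiv _ _).symm (dualComparison U DC DD d)) ≫ dualComparisonInv U DC DD d

theorem map_dual_counit_comp_adjunctionAntipode (d : D) :
    U.map (F.map (DC.V.map (U.map (adj.counit.app d)).op)) ≫
      adjunctionAntipode F U adj DC DD (U.obj d) = dualAction F U adj DC DD d := by
  have hε : F.map (U.map (DD.V.map (adj.counit.app d).op)) ≫
      adj.counit.app (DD.V.obj (op (F.obj (U.obj d)))) =
        adj.counit.app (DD.V.obj (op d)) ≫ DD.V.map (adj.counit.app d).op :=
    adj.counit_naturality _
  rw [adjunctionAntipode, ← U.map_comp_assoc, ← F.map_comp,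
    dualComparison_naturality U DC DD (d₁ := F.obj (U.obj d)), F.map_comp,
    ← U.map_comp_assoc, Category.assoc, hε,
    U.map_comp_assoc, U.map_comp_assoc,
    reassoc_of% dualComparisonInv_naturality U DC DD (d₁ := F.obj (U.obj d)),
    ← DC.V.map_comp, ← op_comp, adj.right_triangle_components]
  simp [dualAction, adj.homEquiv_counit]

theorem map_ev_comp_mateCounit (d : D) :
    F.map (DC.ev (U.obj d)) ≫ mateCounit F U adj =
      mateTensorator F U adj _ _ ≫
        ((adj.homEquiv _ _).symm (dualComparison U DC DD d) ⊗ₘ adj.counit.app d) ≫ DD.ev d := by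
  apply (adj.homEquiv _ _).injective
  rw [adj.homEquiv_naturality_left, homEquiv_mateCounit, ← Category.assoc,
    adj.homEquiv_naturality_right, homEquiv_mateTensorator_comp]
  simp only [Equiv.apply_symm_apply, Adjunction.homEquiv_unit, Functor.id_obj,
    adj.right_triangle_components, tensorHom_id]
  rw [← dualComparison_whiskerRight_evU U DC DD d]
  simp [evU]

theorem map_coev_comp_mateTensorator (d : D) :
    F.map (DC.coev (U.obj d)) ≫ mateTensorator F U adj _ _ ≫
        (adj.counit.app d ⊗ₘ (adj.homEquiv _ _).symm (dualComparison U DC DD d)) =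
      mateCounit F U adj ≫ DD.coev d := by
  apply (adj.homEquiv _ _).injective
  rw [adj.homEquiv_naturality_left, homEquiv_mateTensorator_comp,
    adj.homEquiv_naturality_right, homEquiv_mateCounit]
  simp only [Equiv.apply_symm_apply, Adjunction.homEquiv_unit, Functor.id_obj,
    adj.right_triangle_components, id_tensorHom]
  rw [reassoc_of% coev_whiskerLeft_dualComparison U DC DD d]
  simp [coevU]

theorem map_ev_comp_monadCounit (d : D) :
    U.map (F.map (DC.ev (U.obj d))) ≫ monadCounit F U adj =
      monadTensorator F U adj _ _ ≫ (dualAction F U adj DC DD d ⊗ₘ U.map (adj.counit.app d)) ≫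
        DC.ev (U.obj d) := by
  let φ' := (adj.homEquiv _ _).symm (dualComparison U DC DD d)
  calc _ = U.map (mateTensorator F U adj _ _ ≫ (φ' ⊗ₘ adj.counit.app d) ≫ DD.ev d) ≫ η U := by
        rw [monadCounit, ← U.map_comp_assoc, map_ev_comp_mateCounit]
    _ = U.map (mateTensorator F U adj _ _) ≫ δ U _ _ ≫ (U.map φ' ⊗ₘ U.map (adj.counit.app d)) ≫
          evU U DD d := by
        simp [evU]
    _ = U.map (mateTensorator F U adj _ _) ≫ δ U _ _ ≫ (U.map φ' ⊗ₘ U.map (adj.counit.app d)) ≫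
          dualComparisonInv U DC DD d ▷ U.obj d ≫ DC.ev (U.obj d) := by
        rw [dualComparisonInv_whiskerRight_ev]
    _ = _ := by
        simp only [← tensorHom_id, tensorHom_comp_tensorHom_assoc, Functor.id_obj,
          Category.comp_id, monadTensorator, dualAction, Category.assoc, φ']

theorem map_coev_comp_monadTensorator (d : D) :
    U.map (F.map (DC.coev (U.obj d))) ≫ monadTensorator F U adj _ _ ≫
        (U.map (adj.counit.app d) ⊗ₘ dualAction F U adj DC DD d) =
      monadCounit F U adj ≫ DC.coev (U.obj d) := by
  let φ' := (adj.homEquiv _ _).symm (dualComparison U DC DD d)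
  calc _ = U.map (F.map (DC.coev (U.obj d)) ≫ mateTensorator F U adj _ _ ≫
          (adj.counit.app d ⊗ₘ φ')) ≫ δ U _ _ ≫ U.obj d ◁ dualComparisonInv U DC DD d := by
        simp only [← id_tensorHom, monadTensorator, dualAction, U.map_comp, Category.assoc,
          Functor.id_obj, ← δ_natural_assoc, tensorHom_comp_tensorHom, Category.comp_id, φ']
    _ = monadCounit F U adj ≫ coevU U DD d ≫ U.obj d ◁ dualComparisonInv U DC DD d := by
        rw [map_coev_comp_mateTensorator]
        simp [monadCounit, coevU]
    _ = _ := by rw [coevU_whiskerLeft_dualComparisonInv]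

end Adjunction

/-- Bruguières–Virelizier: for an adjunction `F ⊣ U` with `U` strong monoidal between
monoidal categories with left duals, the natural transformation `S` defined above is a
left antipode for the bimonad `T = F ⋙ U`: it satisfies the axioms (HM1) and (HM2),
so `T` is a Hopf monad. -/
theorem adjunction_antipode_is_left_antipode (F : C ⥤ D) (U : D ⥤ C) (adj : F ⊣ U)
    [U.Monoidal] (DC : LeftDuality C) (DD : LeftDuality D) :
    (∀ x : C,
      U.map (F.map (DC.ev (U.obj (F.obj x)))) ≫ monadCounit F U adj =
        monadTensorator F U adj (DC.V.obj (op (U.obj (F.obj x)))) (U.obj (F.obj x)) ≫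
          ((U.map (F.map (DC.V.map (U.map (adj.counit.app (F.obj x))).op)) ≫
              adjunctionAntipode F U adj DC DD (U.obj (F.obj x))) ⊗ₘ
            U.map (adj.counit.app (F.obj x))) ≫
            DC.ev (U.obj (F.obj x))) ∧
    (∀ x : C,
      U.map (F.map (DC.coev (U.obj (F.obj x)))) ≫
          monadTensorator F U adj (U.obj (F.obj x)) (DC.V.obj (op (U.obj (F.obj x)))) ≫
            (U.map (adj.counit.app (F.obj x)) ⊗ₘ
              (U.map (F.map (DC.V.map (U.map (adj.counit.app (F.obj x))).op)) ≫
                adjunctionAntipode F U adj DC DD (U.obj (F.obj x)))) =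
        monadCounit F U adj ≫ DC.coev (U.obj (F.obj x))) := by
  refine ⟨fun x => ?_, fun x => ?_⟩
  · rw [map_dual_counit_comp_adjunctionAntipode]
    exact map_ev_comp_monadCounit F U adj DC DD (F.obj x)
  · rw [map_dual_counit_comp_adjunctionAntipode]
    exact map_coev_comp_monadTensorator F U adj DC DD (F.obj x)
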